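/- Let N be a positive integer, μ > 0, and define F_N(Δθ) := (2/π)·( Si((Nπ/2)(Δθ + μ)) − Si((Nπ/2)(Δθ − μ)) ). Then for every Δθ with |Δθ| < μ, the flat-top (interior) approximation error satisfies |F_N(Δθ) − 2| ≤ (8/(Nπ²))·( 1/(μ + Δθ) + 1/(μ − Δθ) ). (Rigorous version of the interior branch of the paper's Proposition 1: inside the target angular region the unconstrained beamforming-gain profile is flat with value 2 up to an O(1/N) correction.) -/

import Mathlib

/-!
Writing `sin t / t = ∫₀^∞ sin t · e^{-ts} ds` and exchanging the integrals gives
`Si T - π/2 = ∫₀^∞ A(s, T) ds`, where `A(s, ·)` is the explicit antiderivative of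
`t ↦ sin t · e^{-ts}` vanishing at infinity; `|A(s, T)| ≤ e^{-Ts}`, so `|Si T - π/2| ≤ 1/T`.
As `Si` is odd, `F_N(Δθ) - 2` is `2/π` times the sum of two such tails, at
`T = (Nπ/2)(μ ± Δθ)`.
-/
open MeasureTheory Real Set

/-- Sine integral `Si(x) = ∫₀ˣ sin t / t dt`, with the integrand extended by `1` at `t = 0`. -/
noncomputable def Si (x : ℝ) : ℝ :=
  ∫ t in (0 : ℝ)..x, if t = 0 then 1 else Real.sin t / t

lemma Si_eq_integral_sinc (x : ℝ) : Si x = ∫ t in (0 : ℝ)..x, sinc t := rfl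

lemma Si_neg (x : ℝ) : Si (-x) = -Si x := by
  have h := intervalIntegral.integral_comp_neg (a := 0) (b := x) sinc
  simp only [sinc_neg, neg_zero] at h
  rw [Si_eq_integral_sinc, Si_eq_integral_sinc, intervalIntegral.integral_symm, h]

lemma integral_exp_neg_mul_Ioi {b : ℝ} (hb : 0 < b) :
    ∫ s in Ioi (0 : ℝ), exp (-b * s) = b⁻¹ := by
  rw [integral_exp_mul_Ioi (neg_lt_zero.2 hb)]
  simp

lemma integral_Ioi_sin_mul_exp_neg_mul {t : ℝ} (ht : 0 < t) :
    ∫ s in Ioi (0 : ℝ), sin t * exp (-t * s) = sin t / t := by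
  rw [integral_const_mul, integral_exp_neg_mul_Ioi ht, div_eq_mul_inv]

noncomputable def sinExpAntideriv (s t : ℝ) : ℝ :=
  -(exp (-t * s) * (s * sin t + cos t)) / (1 + s ^ 2)

lemma hasDerivAt_sinExpAntideriv (s t : ℝ) :
    HasDerivAt (sinExpAntideriv s) (sin t * exp (-t * s)) t := by
  have hexp : HasDerivAt (fun t => exp (-t * s)) (exp (-t * s) * (-1 * s)) t :=
    (((hasDerivAt_id t).neg).mul_const s).exp
  have htrig : HasDerivAt (fun t => s * sin t + cos t) (s * cos t + -sin t) t :=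
    ((hasDerivAt_sin t).const_mul s).add (hasDerivAt_cos t)
  refine (((hexp.mul htrig).neg).div_const (1 + s ^ 2)).congr_deriv ?_
  field_simp
  ring

lemma abs_sinExpAntideriv_le (s t : ℝ) : |sinExpAntideriv s t| ≤ exp (-t * s) := by
  have hpos : 0 < 1 + s ^ 2 := by positivity
  -- Cauchy–Schwarz: `(s sin t + cos t)² ≤ (s² + 1)(sin² t + cos² t)`.
  have hcs : |s * sin t + cos t| ≤ 1 + s ^ 2 := by
    refine abs_le_of_sq_le_sq' ?_ hpos.le |> abs_le.2
    nlinarith [sin_sq_add_cos_sq t, sq_nonneg (s * cos t - sin t)]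
  rw [sinExpAntideriv, abs_div, abs_neg, abs_mul, abs_of_pos (exp_pos _), abs_of_pos hpos,
    div_le_iff₀ hpos]
  exact mul_le_mul_of_nonneg_left hcs (exp_pos _).le

lemma integral_sin_mul_exp_neg_mul (s T : ℝ) :
    ∫ t in (0 : ℝ)..T, sin t * exp (-t * s) = (1 + s ^ 2)⁻¹ + sinExpAntideriv s T := by
  rw [intervalIntegral.integral_eq_sub_of_hasDerivAt (fun t _ => hasDerivAt_sinExpAntideriv s t)
    (by apply Continuous.intervalIntegrable; fun_prop)]
  simp only [sinExpAntideriv, neg_zero, zero_mul, exp_zero, sin_zero, cos_zero]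
  ring

lemma integrableOn_sinExpAntideriv {T : ℝ} (hT : 0 < T) :
    IntegrableOn (fun s => sinExpAntideriv s T) (Ioi 0) := by
  refine Integrable.mono' (integrableOn_exp_mul_Ioi (neg_lt_zero.2 hT) 0) ?_
    (Filter.Eventually.of_forall fun s => abs_sinExpAntideriv_le s T)
  refine Continuous.aestronglyMeasurable ?_
  unfold sinExpAntideriv
  exact Continuous.div (by fun_prop) (by fun_prop) fun s => by positivity

lemma integrable_sin_mul_exp_neg_mul_prod (T : ℝ) :
    Integrable (Function.uncurry fun t s => sin t * exp (-t * s))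
      ((volume.restrict (Ioc (0 : ℝ) T)).prod (volume.restrict (Ioi 0))) := by
  have hcont : Continuous (Function.uncurry fun t s : ℝ => sin t * exp (-t * s)) := by
    unfold Function.uncurry; fun_prop
  rw [integrable_prod_iff hcont.aestronglyMeasurable]
  constructor
  · filter_upwards [ae_restrict_mem measurableSet_Ioc] with t ht
    exact (integrableOn_exp_mul_Ioi (neg_lt_zero.2 ht.1) 0).const_mul (sin t)
  · refine Integrable.mono' (integrableOn_const measure_Ioc_lt_top.ne (C := (1 : ℝ)))
      hcont.aestronglyMeasurable.norm.integral_prod_right' ?_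
    filter_upwards [ae_restrict_mem measurableSet_Ioc] with t ht
    have hnorm : ∀ s, ‖sin t * exp (-t * s)‖ = |sin t| * exp (-t * s) := fun s => by
      rw [norm_mul, norm_eq_abs, norm_eq_abs, abs_of_pos (exp_pos _)]
    simp only [Function.uncurry_apply_pair, hnorm]
    rw [integral_const_mul, integral_exp_neg_mul_Ioi ht.1, ← abs_of_pos (inv_pos.2 ht.1),
      ← abs_mul, ← div_eq_mul_inv, ← sinc_of_ne_zero ht.1.ne', norm_eq_abs, abs_abs]
    exact abs_sinc_le_one t

lemma Si_sub_pi_div_two_eq {T : ℝ} (hT : 0 < T) :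
    Si T - π / 2 = ∫ s in Ioi (0 : ℝ), sinExpAntideriv s T := by
  have hlaplace :
      Si T = ∫ t in Ioc (0 : ℝ) T, ∫ s in Ioi (0 : ℝ), sin t * exp (-t * s) := by
    rw [Si_eq_integral_sinc, intervalIntegral.integral_of_le hT.le]
    refine setIntegral_congr_fun measurableSet_Ioc fun t ht => ?_
    rw [integral_Ioi_sin_mul_exp_neg_mul ht.1, sinc_of_ne_zero ht.1.ne']
  have hinner : ∀ s, ∫ t in Ioc (0 : ℝ) T, sin t * exp (-t * s)
      = (1 + s ^ 2)⁻¹ + sinExpAntideriv s T := fun s => by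
    rw [← intervalIntegral.integral_of_le hT.le, integral_sin_mul_exp_neg_mul]
  rw [hlaplace, integral_integral_swap (integrable_sin_mul_exp_neg_mul_prod T),
    funext hinner, integral_add integrable_inv_one_add_sq.integrableOn
      (integrableOn_sinExpAntideriv hT), integral_Ioi_inv_one_add_sq, arctan_zero]
  ring

lemma abs_Si_sub_pi_div_two_le {T : ℝ} (hT : 0 < T) : |Si T - π / 2| ≤ T⁻¹ := by
  rw [Si_sub_pi_div_two_eq hT, ← integral_exp_neg_mul_Ioi hT, ← norm_eq_abs]
  exact norm_integral_le_of_norm_le (integrableOn_exp_mul_Ioi (neg_lt_zero.2 hT) 0)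
    (Filter.Eventually.of_forall fun s => abs_sinExpAntideriv_le s T)

theorem flat_top_interior_bound_general (N : ℕ) (hN : 0 < N) (μ : ℝ)
    (Δθ : ℝ) (h : |Δθ| < μ) :
    |(2 / Real.pi) * (Si (((N : ℝ) * Real.pi / 2) * (Δθ + μ))
        - Si (((N : ℝ) * Real.pi / 2) * (Δθ - μ))) - 2|
      ≤ (8 / ((N : ℝ) * Real.pi ^ 2)) * (1 / (μ + Δθ) + 1 / (μ - Δθ)) := by
  set c : ℝ := (N : ℝ) * π / 2
  have hc : 0 < c := by positivity
  obtain ⟨hlo, hhi⟩ := abs_lt.1 h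
  have ha : 0 < c * (Δθ + μ) := mul_pos hc (by linarith)
  have hb : 0 < c * (μ - Δθ) := mul_pos hc (by linarith)
  have hsplit : (2 / π) * (Si (c * (Δθ + μ)) - Si (c * (Δθ - μ))) - 2
      = (2 / π) * ((Si (c * (Δθ + μ)) - π / 2) + (Si (c * (μ - Δθ)) - π / 2)) := by
    rw [show c * (Δθ - μ) = -(c * (μ - Δθ)) by ring, Si_neg]
    field_simp
    ring
  calc |(2 / π) * (Si (c * (Δθ + μ)) - Si (c * (Δθ - μ))) - 2|
      ≤ (2 / π) * ((c * (Δθ + μ))⁻¹ + (c * (μ - Δθ))⁻¹) := by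
        rw [hsplit, abs_mul, abs_of_pos (by positivity)]
        gcongr
        exact (abs_add_le _ _).trans
          (add_le_add (abs_Si_sub_pi_div_two_le ha) (abs_Si_sub_pi_div_two_le hb))
    _ = (4 / ((N : ℝ) * π ^ 2)) * (1 / (μ + Δθ) + 1 / (μ - Δθ)) := by
        simp only [c]
        rw [add_comm Δθ μ]
        field_simp
        ring
    _ ≤ (8 / ((N : ℝ) * π ^ 2)) * (1 / (μ + Δθ) + 1 / (μ - Δθ)) := by
        gcongr
        · have : 0 < μ + Δθ := by linarith
          have : 0 < μ - Δθ := by linarith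
          positivity
        · norm_num

/-- Rigorous version of the interior branch of the paper's Proposition 1: inside the
target angular region `|Δθ| < μ`, the (normalized) unconstrained beamforming-gain
profile `F_N(Δθ) = (2/π)(Si((Nπ/2)(Δθ+μ)) - Si((Nπ/2)(Δθ-μ)))` is flat with value `2`
up to an `O(1/N)` correction. -/
theorem flat_top_interior_bound (N : ℕ) (hN : 0 < N) (μ : ℝ) (hμ : 0 < μ)
    (Δθ : ℝ) (h : |Δθ| < μ) :
    |(2 / Real.pi) * (Si (((N : ℝ) * Real.pi / 2) * (Δθ + μ))
        - Si (((N : ℝ) * Real.pi / 2) * (Δθ - μ))) - 2|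
      ≤ (8 / ((N : ℝ) * Real.pi ^ 2)) * (1 / (μ + Δθ) + 1 / (μ - Δθ)) :=
  flat_top_interior_bound_general N hN μ Δθ h
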